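/- Evaluation of a linear closure cannot produce a larger value: if the environment ρ linearly closes the term t and E'(t^ℓ)ρ = c, then |c| ≤ |t,ρ|. -/

import Mathlib

set_option maxHeartbeats 1000000

namespace CFA

/-! ### Syntax of labeled λ-terms -/

/-- Labeled expressions of the untyped λ-calculus: `e ::= t^ℓ` with
`t ::= x | (e e) | (λx.e)`.  Variables and labels are natural numbers;
each constructor carries the label of the expression. -/
inductive Exp : Type
  | var : ℕ → ℕ → Exp
  | app : Exp → Exp → ℕ → Exp
  | lam : ℕ → Exp → ℕ → Exp
  deriving DecidableEq

namespace Exp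

/-- The (outermost) label of an expression. -/
def lbl : Exp → ℕ
  | var _ ℓ => ℓ
  | app _ _ ℓ => ℓ
  | lam _ _ ℓ => ℓ

/-- Free variables. -/
def fv : Exp → Finset ℕ
  | var x _ => {x}
  | app e1 e2 _ => e1.fv ∪ e2.fv
  | lam x b _ => b.fv.erase x

/-- Bound variables. -/
def bv : Exp → Finset ℕ
  | var _ _ => ∅
  | app e1 e2 _ => e1.bv ∪ e2.bv
  | lam x b _ => insert x b.bv

/-- All labels (and variable names) occurring in an expression. -/
def labels : Exp → Finset ℕ
  | var x ℓ => {x, ℓ}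
  | app e1 e2 ℓ => insert ℓ (e1.labels ∪ e2.labels)
  | lam x b ℓ => insert ℓ (insert x b.labels)

/-- Labels (and variable names) of the underlying term, i.e. omitting the
outermost label. -/
def termLabels : Exp → Finset ℕ
  | var x _ => {x}
  | app e1 e2 _ => e1.labels ∪ e2.labels
  | lam x b _ => insert x b.labels

/-- The list of labels of all subexpressions. -/
def labelList : Exp → List ℕ
  | var _ ℓ => [ℓ]
  | app e1 e2 ℓ => ℓ :: (e1.labelList ++ e2.labelList)
  | lam _ b ℓ => ℓ :: b.labelList

/-- Size of (the term underlying) an expression. -/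
def size : Exp → ℕ
  | var _ _ => 1
  | app e1 e2 _ => 1 + e1.size + e2.size
  | lam _ b _ => 1 + b.size

/-- Number of free occurrences of the variable `x`. -/
def countFree (x : ℕ) : Exp → ℕ
  | var y _ => if y = x then 1 else 0
  | app e1 e2 _ => e1.countFree x + e2.countFree x
  | lam y b _ => if y = x then 0 else b.countFree x

/-- A term is linear if every bound variable occurs exactly once (free)
in the body of its binder. -/
def Linear : Exp → Prop
  | var _ _ => True
  | app e1 e2 _ => e1.Linear ∧ e2.Linear
  | lam x b _ => b.Linear ∧ b.countFree x = 1

/-- `x` occurs (free or bound) in the expression. -/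
def Occurs (x : ℕ) : Exp → Prop
  | var y _ => y = x
  | app e1 e2 _ => e1.Occurs x ∨ e2.Occurs x
  | lam y b _ => y = x ∨ b.Occurs x

end Exp

/-- The subexpression relation. -/
inductive SubExp : Exp → Exp → Prop
  | refl (e) : SubExp e e
  | appL {e e1 e2 ℓ} : SubExp e e1 → SubExp e (Exp.app e1 e2 ℓ)
  | appR {e e1 e2 ℓ} : SubExp e e2 → SubExp e (Exp.app e1 e2 ℓ)
  | lamB {e x b ℓ} : SubExp e b → SubExp e (Exp.lam x b ℓ)

/-- A program is a closed expression whose subexpressions carry pairwise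
distinct labels. -/
def Program (e : Exp) : Prop := e.fv = ∅ ∧ e.labelList.Nodup

/-! ### Concrete values, environments and the evaluators `E` and `E'` -/

/-- Closures: `⟨λx.e, ρ⟩`, a λ-abstraction (variable, body, label)
together with an environment for its free variables. -/
inductive Val : Type
  | clo : ℕ → Exp → ℕ → (ℕ → Option Val) → Val

/-- Environments: partial maps from variables to closures. -/
abbrev Env : Type := ℕ → Option Val

/-- Restriction of an environment to a set of variables. -/
def Env.restrict (ρ : Env) (s : Finset ℕ) : Env := fun x => if x ∈ s then ρ x else none

/-- Environment extension `ρ[x ↦ v]`. -/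
def Env.update (ρ : Env) (x : ℕ) (v : Val) : Env := fun y => if y = x then some v else ρ y

/-- The empty environment. -/
def emptyEnv : Env := fun _ => none

/-- The environment-based evaluator `E` (big-step). -/
inductive EvalE : Exp → Env → Val → Prop
  | var {ρ : Env} {x ℓ : ℕ} {v : Val} :
      ρ x = some v → EvalE (Exp.var x ℓ) ρ v
  | lam {ρ : Env} {x : ℕ} {b : Exp} {ℓ : ℕ} :
      EvalE (Exp.lam x b ℓ) ρ (Val.clo x b ℓ (ρ.restrict (Exp.lam x b ℓ).fv))
  | app {ρ : Env} {e1 e2 : Exp} {ℓ x : ℕ} {b : Exp} {ℓ' : ℕ} {ρ' : Env} {v v' : Val} :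
      EvalE e1 ρ (Val.clo x b ℓ' ρ') → EvalE e2 ρ v →
      EvalE b (Env.update ρ' x v) v' → EvalE (Exp.app e1 e2 ℓ) ρ v'

/-- The environment-tightening evaluator `E'` (big-step). -/
inductive EvalE' : Exp → Env → Val → Prop
  | var {x ℓ : ℕ} {v : Val} :
      EvalE' (Exp.var x ℓ) (Env.update emptyEnv x v) v
  | lam {ρ : Env} {x : ℕ} {b : Exp} {ℓ : ℕ} :
      EvalE' (Exp.lam x b ℓ) ρ (Val.clo x b ℓ ρ)
  | app {ρ : Env} {e1 e2 : Exp} {ℓ x : ℕ} {b : Exp} {ℓ' : ℕ} {ρ' : Env} {v v' : Val} :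
      EvalE' e1 (ρ.restrict e1.fv) (Val.clo x b ℓ' ρ') →
      EvalE' e2 (ρ.restrict e2.fv) v →
      EvalE' b (Env.update ρ' x v) v' → EvalE' (Exp.app e1 e2 ℓ) ρ v'

/-- `x` occurs (free or bound) in a closure: in its term or in some value
in the range of its environment. -/
inductive Val.Occurs (x : ℕ) : Val → Prop
  | term {y : ℕ} {b : Exp} {ℓ : ℕ} {ρ : ℕ → Option Val} :
      (Exp.lam y b ℓ).Occurs x → Val.Occurs x (Val.clo y b ℓ ρ)
  | env {y : ℕ} {b : Exp} {ℓ : ℕ} {ρ : ℕ → Option Val} {z : ℕ} {v : Val} :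
      ρ z = some v → Val.Occurs x v → Val.Occurs x (Val.clo y b ℓ ρ)

/-- A label (or variable name) occurring in a closure. -/
inductive Val.LabelIn (a : ℕ) : Val → Prop
  | term {y : ℕ} {b : Exp} {ℓ : ℕ} {ρ : ℕ → Option Val} :
      a ∈ (Exp.lam y b ℓ).labels → Val.LabelIn a (Val.clo y b ℓ ρ)
  | env {y : ℕ} {b : Exp} {ℓ : ℕ} {ρ : ℕ → Option Val} {z : ℕ} {v : Val} :
      ρ z = some v → Val.LabelIn a v → Val.LabelIn a (Val.clo y b ℓ ρ)

/-- `ρ` linearly closes `t` (⟨t,ρ⟩ is a linear closure). -/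
inductive LinCloses : Env → Exp → Prop
  | mk {ρ : Env} {t : Exp} :
      t.Linear →
      (∀ x ∈ t.fv, (ρ x).isSome) →
      (∀ x v, ρ x = some v → t.countFree x = 1) →
      (∀ x y b ℓ ρ', ρ x = some (Val.clo y b ℓ ρ') → LinCloses ρ' (Exp.lam y b ℓ)) →
      (∀ x v, ρ x = some v → ∀ y w, ρ y = some w → ¬ Val.Occurs x w) →
      LinCloses ρ t

mutual
  /-- Size of a linear closure: `|⟨t,ρ⟩| = |t| + |ρ|`. -/
  inductive ValSize : Val → ℕ → Prop
    | clo {x : ℕ} {b : Exp} {ℓ : ℕ} {ρ : ℕ → Option Val} {m : ℕ} :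
        EnvSize ρ m → ValSize (Val.clo x b ℓ ρ) ((Exp.lam x b ℓ).size + m)
  /-- Size of a (finitely supported) environment:
  `|[x₁↦c₁,…,xₙ↦cₙ]| = n + Σᵢ |cᵢ|`. -/
  inductive EnvSize : (ℕ → Option Val) → ℕ → Prop
    | empty {ρ : ℕ → Option Val} : (∀ x, ρ x = none) → EnvSize ρ 0
    | cons {ρ : ℕ → Option Val} {x : ℕ} {v : Val} {n m : ℕ} :
        ρ x = some v → ValSize v n →
        EnvSize (fun y => if y = x then none else ρ y) m →
        EnvSize ρ (1 + n + m)
end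

/-! ### 0CFA and simple closure analysis -/

/-- Abstract caches map labels (resp. variables) to sets of terms. -/
abbrev Cache : Type := ℕ → Set Exp

/-- One step of the 0CFA acceptability functional. -/
def Step0 (C r : Cache) (S : Exp → Prop) : Exp → Prop
  | Exp.var x ℓ => r x ⊆ C ℓ
  | Exp.lam x b ℓ => Exp.lam x b ℓ ∈ C ℓ
  | Exp.app e1 e2 ℓ =>
      S e1 ∧ S e2 ∧
      ∀ x b ℓb, Exp.lam x b ℓb ∈ C e1.lbl →
        C e2.lbl ⊆ r x ∧ S b ∧ C b.lbl ⊆ C ℓ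

/-- 0CFA acceptability `Ĉ,r̂ ⊨ e`, defined coinductively (membership in the
greatest fixed point of the monotone functional `Step0`, i.e. membership in
some post-fixed point). -/
def Acceptable0 (C r : Cache) (e : Exp) : Prop :=
  ∃ S : Exp → Prop, (∀ e', S e' → Step0 C r S e') ∧ S e

/-- One step of the simple closure analysis acceptability functional
(bidirectional: equalities instead of containments). -/
def StepSC (C r : Cache) (S : Exp → Prop) : Exp → Prop
  | Exp.var x ℓ => r x = C ℓ
  | Exp.lam x b ℓ => Exp.lam x b ℓ ∈ C ℓ
  | Exp.app e1 e2 ℓ =>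
      S e1 ∧ S e2 ∧
      ∀ x b ℓb, Exp.lam x b ℓb ∈ C e1.lbl →
        C e2.lbl = r x ∧ S b ∧ C b.lbl = C ℓ

/-- Simple closure analysis acceptability `Ĉ,r̂ ⊨ e` (coinductive). -/
def AcceptableSC (C r : Cache) (e : Exp) : Prop :=
  ∃ S : Exp → Prop, (∀ e', S e' → StepSC C r S e') ∧ S e

/-- Pointwise order on caches. -/
def CacheLE (C C' : Cache) : Prop := ∀ ℓ, C ℓ ⊆ C' ℓ

/-- `(C, r)` is the least acceptable 0CFA cache of `e`. -/
def IsLeast0CFA (e : Exp) (C r : Cache) : Prop :=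
  Acceptable0 C r e ∧ ∀ C' r', Acceptable0 C' r' e → CacheLE C C' ∧ CacheLE r r'

/-- `(C, r)` is the least acceptable simple closure analysis cache of `e`. -/
def IsLeastSC (e : Exp) (C r : Cache) : Prop :=
  AcceptableSC C r e ∧ ∀ C' r', AcceptableSC C' r' e → CacheLE C C' ∧ CacheLE r r'

/-- A cache `Ĉ,r̂` respects a closure `⟨t,ρ⟩`. -/
inductive Respects : Cache → Cache → Exp → Env → Prop
  | mk {C r : Cache} {t : Exp} {ρ : Env} :
      LinCloses ρ t →
      (∀ x y b ℓ ρ', ρ x = some (Val.clo y b ℓ ρ') → r x = {Exp.lam y b ℓ}) →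
      (∀ x y b ℓ ρ', ρ x = some (Val.clo y b ℓ ρ') → Respects C r (Exp.lam y b ℓ) ρ') →
      (∀ ℓ ∈ t.termLabels, C ℓ = ∅) →
      (∀ x ∈ t.bv, r x = ∅) →
      Respects C r t ρ

/-! ### The cache-passing abstract evaluator `A₀` for simple closure analysis -/

abbrev ACache : Type := Cache × Cache

/-- Bidirectionally identify `C ℓ` and `r x` (update both to their union). -/
def identCR (C r : Cache) (ℓ x : ℕ) : ACache :=
  (fun a => if a = ℓ then C ℓ ∪ r x else C a,
   fun y => if y = x then C ℓ ∪ r x else r y)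

/-- Bidirectionally identify `C a` and `C b`. -/
def identCC (C : Cache) (a b : ℕ) : Cache :=
  fun c => if c = a ∨ c = b then C a ∪ C b else C c

/-- The cache-passing abstract evaluator `A₀` of simple closure analysis,
as a big-step relation `A₀(e)(Ĉ,r̂) = (Ĉ',r̂')`. -/
inductive AEval0 : Exp → ACache → ACache → Prop
  | var {C r : Cache} {x ℓ : ℕ} :
      AEval0 (Exp.var x ℓ) (C, r) (identCR C r ℓ x)
  | lam {C r : Cache} {x : ℕ} {b : Exp} {ℓ : ℕ} :
      AEval0 (Exp.lam x b ℓ) (C, r)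
        (fun a => if a = ℓ then insert (Exp.lam x b ℓ) (C a) else C a, r)
  | app {C r C1 r1 C2 r2 : Cache} {e1 e2 : Exp} {ℓ : ℕ} {G : Exp → ACache} :
      AEval0 e1 (C, r) (C1, r1) →
      AEval0 e2 (C1, r1) (C2, r2) →
      (∀ x b ℓb, Exp.lam x b ℓb ∈ C2 e1.lbl →
          AEval0 b (identCR C2 r2 e2.lbl x) (G (Exp.lam x b ℓb))) →
      AEval0 (Exp.app e1 e2 ℓ) (C, r)
        (fun a => C2 a ∪ ⋃ (x : ℕ) (b : Exp) (ℓb : ℕ)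
            (_ : Exp.lam x b ℓb ∈ C2 e1.lbl),
              identCC (G (Exp.lam x b ℓb)).1 ℓ b.lbl a,
         fun y => r2 y ∪ ⋃ (x : ℕ) (b : Exp) (ℓb : ℕ)
            (_ : Exp.lam x b ℓb ∈ C2 e1.lbl),
              (G (Exp.lam x b ℓb)).2 y)

/-! ### kCFA -/

/-- Contours: strings of application labels. -/
abbrev Contour : Type := List ℕ

/-- Contour environments. -/
abbrev CEnv : Type := ℕ → Contour

def emptyCEnv : CEnv := fun _ => []

/-- Abstract closures. -/
abbrev Clo : Type := Exp × CEnv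

/-- Abstract caches of kCFA (indexed by label/variable and contour). -/
abbrev KCache : Type := ℕ → Contour → Set Clo

/-- `⌈δ⌉ₖ`: truncate a contour to its rightmost `k` labels. -/
def trunc (k : ℕ) (δ : Contour) : Contour := List.drop (List.length δ - k) δ

def CEnv.restrict (ce : CEnv) (s : Finset ℕ) : CEnv := fun x => if x ∈ s then ce x else []

def CEnv.update (ce : CEnv) (x : ℕ) (δ : Contour) : CEnv := fun y => if y = x then δ else ce y

/-- One step of the kCFA acceptability functional. -/
def StepK (k : ℕ) (C r : KCache) (S : Exp → CEnv → Contour → Prop) :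
    Exp → CEnv → Contour → Prop
  | Exp.var x ℓ, ce, δ => r x (ce x) ⊆ C ℓ δ
  | Exp.lam x b ℓ, ce, δ =>
      (⟨Exp.lam x b ℓ, CEnv.restrict ce (Exp.lam x b ℓ).fv⟩ : Clo) ∈ C ℓ δ
  | Exp.app e1 e2 ℓ, ce, δ =>
      S e1 ce δ ∧ S e2 ce δ ∧
      ∀ x b ℓb ce', (⟨Exp.lam x b ℓb, ce'⟩ : Clo) ∈ C e1.lbl δ →
        C e2.lbl δ ⊆ r x (trunc k (δ ++ [ℓ])) ∧
        S b (CEnv.update ce' x (trunc k (δ ++ [ℓ]))) (trunc k (δ ++ [ℓ])) ∧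
        C b.lbl (trunc k (δ ++ [ℓ])) ⊆ C ℓ δ

/-- kCFA acceptability `Ĉ,r̂ ⊨^{ce}_δ e` (coinductive). -/
def AcceptableK (k : ℕ) (C r : KCache) (e : Exp) (ce : CEnv) (δ : Contour) : Prop :=
  ∃ S : Exp → CEnv → Contour → Prop,
    (∀ e' ce' δ', S e' ce' δ' → StepK k C r S e' ce' δ') ∧ S e ce δ

def KCacheLE (C C' : KCache) : Prop := ∀ ℓ δ, C ℓ δ ⊆ C' ℓ δ

/-- `(C, r)` is the least acceptable kCFA cache of the program `e`
(analyzed with empty initial contour and environment). -/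
def IsLeastKCFA (k : ℕ) (e : Exp) (C r : KCache) : Prop :=
  AcceptableK k C r e emptyCEnv [] ∧
  ∀ C' r', AcceptableK k C' r' e emptyCEnv [] → KCacheLE C C' ∧ KCacheLE r r'

/-! ### Simple types, η-expansion, β-reduction -/

/-- Simple types. -/
inductive Ty : Type
  | base : ℕ → Ty
  | arrow : Ty → Ty → Ty
  deriving DecidableEq

abbrev TyCtx : Type := ℕ → Option Ty

def TyCtx.update (Γ : TyCtx) (x : ℕ) (τ : Ty) : TyCtx := fun y => if y = x then some τ else Γ y

def emptyCtx : TyCtx := fun _ => none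

/-- Simple typing. -/
inductive HasTy : TyCtx → Exp → Ty → Prop
  | var {Γ : TyCtx} {x ℓ : ℕ} {τ : Ty} : Γ x = some τ → HasTy Γ (Exp.var x ℓ) τ
  | lam {Γ : TyCtx} {x : ℕ} {b : Exp} {ℓ : ℕ} {A B : Ty} :
      HasTy (Γ.update x A) b B → HasTy Γ (Exp.lam x b ℓ) (Ty.arrow A B)
  | app {Γ : TyCtx} {e1 e2 : Exp} {ℓ : ℕ} {A B : Ty} :
      HasTy Γ e1 (Ty.arrow A B) → HasTy Γ e2 A → HasTy Γ (Exp.app e1 e2 ℓ) B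

/-- `Expansion h τ e`: `e` is the full η-expansion of the head `h` at type `τ`. -/
inductive Expansion : Exp → Ty → Exp → Prop
  | base {h : Exp} {n : ℕ} : Expansion h (Ty.base n) h
  | arrow {h : Exp} {A B : Ty} {z ℓz ℓa ℓ : ℕ} {a b : Exp} :
      Expansion (Exp.var z ℓz) A a →
      Expansion (Exp.app h a ℓa) B b →
      Expansion h (Ty.arrow A B) (Exp.lam z b ℓ)

/-- Fully η-expanded simply-typed terms: typing where every variable occurring
in function or argument position of an application is fully η-expanded
according to its simple type. -/
inductive EtaTy : TyCtx → Exp → Ty → Prop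
  | varAtom {Γ : TyCtx} {x ℓ n : ℕ} :
      Γ x = some (Ty.base n) → EtaTy Γ (Exp.var x ℓ) (Ty.base n)
  | varEta {Γ : TyCtx} {x ℓx : ℕ} {τ : Ty} {e : Exp} :
      Γ x = some τ → Expansion (Exp.var x ℓx) τ e → HasTy Γ e τ → EtaTy Γ e τ
  | lam {Γ : TyCtx} {x : ℕ} {b : Exp} {ℓ : ℕ} {A B : Ty} :
      EtaTy (Γ.update x A) b B → EtaTy Γ (Exp.lam x b ℓ) (Ty.arrow A B)
  | app {Γ : TyCtx} {e1 e2 : Exp} {ℓ : ℕ} {A B : Ty} :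
      EtaTy Γ e1 (Ty.arrow A B) → EtaTy Γ e2 A → EtaTy Γ (Exp.app e1 e2 ℓ) B

/-- Substitution `e[x := s]` (naive, capture-permitting). -/
def subst (x : ℕ) (s : Exp) : Exp → Exp
  | Exp.var y ℓ => if y = x then s else Exp.var y ℓ
  | Exp.app e1 e2 ℓ => Exp.app (subst x s e1) (subst x s e2) ℓ
  | Exp.lam y b ℓ => if y = x then Exp.lam y b ℓ else Exp.lam y (subst x s b) ℓ

/-- β-reduction. -/
inductive BetaStep : Exp → Exp → Prop
  | beta {x : ℕ} {b : Exp} {ℓb : ℕ} {a : Exp} {ℓ : ℕ} :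
      BetaStep (Exp.app (Exp.lam x b ℓb) a ℓ) (subst x a b)
  | appL {e1 e1' e2 : Exp} {ℓ : ℕ} : BetaStep e1 e1' →
      BetaStep (Exp.app e1 e2 ℓ) (Exp.app e1' e2 ℓ)
  | appR {e1 e2 e2' : Exp} {ℓ : ℕ} : BetaStep e2 e2' →
      BetaStep (Exp.app e1 e2 ℓ) (Exp.app e1 e2' ℓ)
  | lamB {x : ℕ} {b b' : Exp} {ℓ : ℕ} : BetaStep b b' →
      BetaStep (Exp.lam x b ℓ) (Exp.lam x b' ℓ)

/-- `e` normalizes to the β-normal form `e'`. -/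
def NormalizesTo (e e' : Exp) : Prop :=
  Relation.ReflTransGen BetaStep e e' ∧ ∀ e'', ¬ BetaStep e' e''

/-! ### Deterministic Turing machines and time-bounded computation -/

inductive Move : Type
  | left
  | right

/-- Single-tape deterministic Turing machines over input alphabet `Bool`
(tape symbol 0 is blank, 1 codes `false`, 2 codes `true`). -/
structure DTM : Type where
  states : ℕ
  symbols : ℕ
  hsym : 3 ≤ symbols
  init : Fin states
  accept : Fin states
  reject : Fin states
  step : Fin states → Fin symbols → Fin states × Fin symbols × Move

structure DTMCfg (M : DTM) : Type where
  state : Fin M.states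
  head : ℤ
  tape : ℤ → Fin M.symbols

def DTM.blank (M : DTM) : Fin M.symbols := ⟨0, by have := M.hsym; omega⟩

def DTM.sym (M : DTM) (b : Bool) : Fin M.symbols :=
  if b then ⟨2, by have := M.hsym; omega⟩ else ⟨1, by have := M.hsym; omega⟩

def DTM.initCfg (M : DTM) (w : List Bool) : DTMCfg M :=
  { state := M.init, head := 0,
    tape := fun i => if 0 ≤ i then
        (match w[i.toNat]? with
          | some b => M.sym b
          | none => M.blank)
      else M.blank }

def DTM.stepCfg (M : DTM) (c : DTMCfg M) : DTMCfg M :=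
  if c.state = M.accept ∨ c.state = M.reject then c
  else
    let t := M.step c.state (c.tape c.head)
    { state := t.1,
      head := c.head + (match t.2.2 with | Move.left => -1 | Move.right => 1),
      tape := fun i => if i = c.head then t.2.1 else c.tape i }

/-- The configuration of `M` on input `w` after `n` steps. -/
def DTM.run (M : DTM) (w : List Bool) (n : ℕ) : DTMCfg M :=
  M.stepCfg^[n] (M.initCfg w)

def DTM.Accepts (M : DTM) (w : List Bool) : Prop :=
  ∃ n, (M.run w n).state = M.accept

def DTM.AcceptsWithin (M : DTM) (w : List Bool) (T : ℕ) : Prop :=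
  ∃ n ≤ T, (M.run w n).state = M.accept

def DTM.RejectsWithin (M : DTM) (w : List Bool) (T : ℕ) : Prop :=
  ∃ n ≤ T, (M.run w n).state = M.reject

/-- `M` decides the language `L` within time bound `T`. -/
def DTM.DecidesInTime (M : DTM) (L : Set (List Bool)) (T : ℕ → ℕ) : Prop :=
  ∀ w : List Bool,
    (w ∈ L → M.AcceptsWithin w (T w.length)) ∧
    (w ∉ L → M.RejectsWithin w (T w.length))

/-- PTIME: languages decidable by a deterministic TM in polynomial time. -/
def InPTIME (L : Set (List Bool)) : Prop :=
  ∃ (M : DTM) (c : ℕ), M.DecidesInTime L (fun n => (n + 2) ^ c)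

/-- EXPTIME: languages decidable by a deterministic TM in time `2^{n^{O(1)}}`. -/
def InEXPTIME (L : Set (List Bool)) : Prop :=
  ∃ (M : DTM) (c : ℕ), M.DecidesInTime L (fun n => 2 ^ ((n + 2) ^ c))

/-! ### Logspace machines: read-only input tape, work tape, write-only output -/

inductive Move3 : Type
  | left
  | stay
  | right

def Move3.toInt : Move3 → ℤ
  | Move3.left => -1
  | Move3.stay => 0
  | Move3.right => 1

/-- Deterministic machines with a read-only input tape (`none` = off the
input word), a two-way work tape, and a write-only output tape. -/
structure LTM : Type where
  states : ℕ
  symbols : ℕ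
  hsym : 1 ≤ symbols
  init : Fin states
  accept : Fin states
  reject : Fin states
  step : Fin states → Option Bool → Fin symbols →
    Fin states × Fin symbols × Move3 × Move3 × Option Bool

structure LTMCfg (M : LTM) : Type where
  state : Fin M.states
  inHead : ℤ
  workHead : ℤ
  work : ℤ → Fin M.symbols
  out : List Bool

def LTM.blank (M : LTM) : Fin M.symbols := ⟨0, by have := M.hsym; omega⟩

def readBit (w : List Bool) (i : ℤ) : Option Bool :=
  if 0 ≤ i then w[i.toNat]? else none

def LTM.stepCfg (M : LTM) (w : List Bool) (c : LTMCfg M) : LTMCfg M :=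
  if c.state = M.accept ∨ c.state = M.reject then c
  else
    let t := M.step c.state (readBit w c.inHead) (c.work c.workHead)
    { state := t.1,
      inHead := c.inHead + t.2.2.1.toInt,
      workHead := c.workHead + t.2.2.2.1.toInt,
      work := fun i => if i = c.workHead then t.2.1 else c.work i,
      out := c.out ++ (match t.2.2.2.2 with | none => [] | some b => [b]) }

def LTM.initCfg (M : LTM) : LTMCfg M :=
  { state := M.init, inHead := 0, workHead := 0, work := fun _ => M.blank, out := [] }

def LTM.run (M : LTM) (w : List Bool) (n : ℕ) : LTMCfg M :=
  (M.stepCfg w)^[n] M.initCfg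

/-- `M` decides `L` with its work head confined to `S (|w|)` cells. -/
def LTM.DecidesInSpace (M : LTM) (L : Set (List Bool)) (S : ℕ → ℕ) : Prop :=
  ∀ w : List Bool,
    (w ∈ L → ∃ n, (M.run w n).state = M.accept) ∧
    (w ∉ L → ∃ n, (M.run w n).state = M.reject) ∧
    (∀ n, ((M.run w n).workHead).natAbs ≤ S w.length)

/-- LOGSPACE: languages decidable in deterministic logarithmic space. -/
def InLOGSPACE (L : Set (List Bool)) : Prop :=
  ∃ (M : LTM) (c : ℕ), M.DecidesInSpace L (fun n => c * Nat.log 2 (n + 2) + c)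

/-- `M` computes the function `f` (on its output tape) in space `S`. -/
def LTM.ComputesInSpace (M : LTM) (f : List Bool → List Bool) (S : ℕ → ℕ) : Prop :=
  ∀ w : List Bool,
    (∃ n, (M.run w n).state = M.accept ∧ (M.run w n).out = f w) ∧
    (∀ n, ((M.run w n).workHead).natAbs ≤ S w.length)

def LogspaceComputable (f : List Bool → List Bool) : Prop :=
  ∃ (M : LTM) (c : ℕ), M.ComputesInSpace f (fun n => c * Nat.log 2 (n + 2) + c)

/-- Logspace many-one reducibility. -/
def LogspaceReducible (L1 L2 : Set (List Bool)) : Prop :=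
  ∃ f : List Bool → List Bool, LogspaceComputable f ∧ ∀ w, w ∈ L1 ↔ f w ∈ L2

def PTimeHard (L : Set (List Bool)) : Prop :=
  ∀ L' : Set (List Bool), InPTIME L' → LogspaceReducible L' L

def PTimeComplete (L : Set (List Bool)) : Prop := InPTIME L ∧ PTimeHard L

def EXPTIMEHard (L : Set (List Bool)) : Prop :=
  ∀ L' : Set (List Bool), InEXPTIME L' → LogspaceReducible L' L

/-- Injective pairing of bit strings. -/
def pairEncode (a b : List Bool) : List Bool :=
  (a.map fun x => [true, x]).flatten ++ [false, false] ++ b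

/-- NP via polynomially bounded certificates and a PTIME verifier. -/
def InNP (L : Set (List Bool)) : Prop :=
  ∃ (V : Set (List Bool)) (c : ℕ), InPTIME V ∧
    ∀ w, w ∈ L ↔ ∃ cert : List Bool,
      cert.length ≤ (w.length + 2) ^ c ∧ pairEncode w cert ∈ V

def NPHard (L : Set (List Bool)) : Prop :=
  ∀ L' : Set (List Bool), InNP L' → LogspaceReducible L' L

/-! ### Encodings of flow analysis instances -/

def encNat (n : ℕ) : List Bool := List.replicate n true ++ [false]

def Exp.encode : Exp → List Bool
  | Exp.var x ℓ => [false, false] ++ encNat x ++ encNat ℓ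
  | Exp.app e1 e2 ℓ => [false, true] ++ encNat ℓ ++ e1.encode ++ e2.encode
  | Exp.lam x b ℓ => [true, false] ++ encNat x ++ encNat ℓ ++ b.encode

/-- Encoding of an instance `(e, v, ℓ)` of a monovariant control flow problem. -/
def encodeInstance (e v : Exp) (ℓ : ℕ) : List Bool :=
  pairEncode e.encode (pairEncode v.encode (encNat ℓ))

def encNatList (l : List ℕ) : List Bool := encNat l.length ++ (l.map encNat).flatten

def encEnvList (l : List (ℕ × List ℕ)) : List Bool :=
  encNat l.length ++ (l.map fun p => encNat p.1 ++ encNatList p.2).flatten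

/-- Interpret a finite association list as a contour environment. -/
def envOfList (l : List (ℕ × List ℕ)) : CEnv :=
  fun x => (((l.find? fun p => p.1 = x).map Prod.snd).getD [])

/-- Encoding of an instance `(e, ⟨v, ce⟩, (ℓ, δ))` of the kCFA control flow
problem (`env` is an association list describing the closure environment). -/
def encodeKInstance (e v : Exp) (env : List (ℕ × List ℕ)) (ℓ : ℕ) (δ : List ℕ) : List Bool :=
  pairEncode e.encode (pairEncode v.encode
    (pairEncode (encEnvList env) (pairEncode (encNat ℓ) (encNatList δ))))

/-- The control flow problem for 0CFA. -/
def CFP0 : Set (List Bool) :=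
  { w | ∃ (e v : Exp) (ℓ : ℕ) (C r : Cache),
      w = encodeInstance e v ℓ ∧ Program e ∧ IsLeast0CFA e C r ∧ v ∈ C ℓ }

/-- The control flow problem for simple closure analysis. -/
def CFPSC : Set (List Bool) :=
  { w | ∃ (e v : Exp) (ℓ : ℕ) (C r : Cache),
      w = encodeInstance e v ℓ ∧ Program e ∧ IsLeastSC e C r ∧ v ∈ C ℓ }

/-- The control flow problem for kCFA. -/
def CFPK (k : ℕ) : Set (List Bool) :=
  { w | ∃ (e v : Exp) (env : List (ℕ × List ℕ)) (ℓ : ℕ) (δ : List ℕ) (C r : KCache),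
      w = encodeKInstance e v env ℓ δ ∧ Program e ∧ IsLeastKCFA k e C r ∧
      (⟨v, envOfList env⟩ : Clo) ∈ C ℓ δ }

/-- Contours are never truncated in the least analysis of `e`: whenever a
closure flows to the operator of an application at contour `δ`, extending `δ`
by the application's label stays within the contour bound `k`. -/
def NoTruncation (k : ℕ) (e : Exp) (C : KCache) : Prop :=
  ∀ e1 e2 ℓ, SubExp (Exp.app e1 e2 ℓ) e →
    ∀ δ : Contour, (C e1.lbl δ).Nonempty → δ.length < k

/-- Exact kCFA instances: contours are never truncated and every cache entry
contains at most one closure, so abstract and instrumented interpretation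
coincide. -/
def ExactK (k : ℕ) (e : Exp) : Prop :=
  ∀ C r : KCache, IsLeastKCFA k e C r →
    NoTruncation k e C ∧ (∀ ℓ δ, (C ℓ δ).Subsingleton) ∧ (∀ x δ, (r x δ).Subsingleton)

/-- The control flow problem for exact kCFA. -/
def CFPKExact (k : ℕ) : Set (List Bool) :=
  { w | ∃ (e v : Exp) (env : List (ℕ × List ℕ)) (ℓ : ℕ) (δ : List ℕ) (C r : KCache),
      w = encodeKInstance e v env ℓ δ ∧ Program e ∧ ExactK k e ∧
      IsLeastKCFA k e C r ∧ (⟨v, envOfList env⟩ : Clo) ∈ C ℓ δ }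

/-! ### SAT and the permutation problem -/

def evalLit (σ : ℕ → Bool) (l : Bool × ℕ) : Bool := if l.1 then σ l.2 else !(σ l.2)

/-- Satisfiability of a CNF formula (a list of clauses of signed literals). -/
def CNFSat (φ : List (List (Bool × ℕ))) : Prop :=
  ∃ σ : ℕ → Bool, ∀ c ∈ φ, ∃ l ∈ c, evalLit σ l = true

def encLit (l : Bool × ℕ) : List Bool := l.1 :: encNat l.2

def encClause (c : List (Bool × ℕ)) : List Bool := encNat c.length ++ (c.map encLit).flatten

def encCNF (φ : List (List (Bool × ℕ))) : List Bool := encNat φ.length ++ (φ.map encClause).flatten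

/-- Boolean satisfiability as a language. -/
def SATlang : Set (List Bool) :=
  { w | ∃ φ : List (List (Bool × ℕ)), w = encCNF φ ∧ CNFSat φ }

def encPermInstance (l : List ℕ) (i : ℕ) : List Bool := pairEncode (encNatList l) (encNat i)

/-- The permutation problem: given a permutation `π` of `{0,…,n-1}` (presented
by its list of images) and an index `i`, are `0` and `i` on the same cycle? -/
def PermProblem : Set (List Bool) :=
  { w | ∃ (n : ℕ) (h : 0 < n) (π : Equiv.Perm (Fin n)) (i : Fin n),
      w = encPermInstance (List.ofFn fun j => (π j : ℕ)) (i : ℕ) ∧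
      π.SameCycle ⟨0, h⟩ i }

/-! ### Restricted control flow problems -/

/-- 0CFA control flow problem restricted to linear, simply-typed, fully
η-expanded programs. -/
def CFP0LinEta : Set (List Bool) :=
  { w | ∃ (e v : Exp) (ℓ : ℕ) (C r : Cache),
      w = encodeInstance e v ℓ ∧ Program e ∧ e.Linear ∧ (∃ τ, EtaTy emptyCtx e τ) ∧
      IsLeast0CFA e C r ∧ v ∈ C ℓ }

/-- 0CFA control flow problem restricted to simply-typed, fully η-expanded
programs. -/
def CFP0Eta : Set (List Bool) :=
  { w | ∃ (e v : Exp) (ℓ : ℕ) (C r : Cache),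
      w = encodeInstance e v ℓ ∧ Program e ∧ (∃ τ, EtaTy emptyCtx e τ) ∧
      IsLeast0CFA e C r ∧ v ∈ C ℓ }

/-- The normalization problem for closed linear, simply-typed, fully
η-expanded programs: given `e` and `e'`, is `e'` the β-normal form of `e`? -/
def NormLinEta : Set (List Bool) :=
  { w | ∃ e e' : Exp, w = pairEncode e.encode e'.encode ∧
      Program e ∧ e.Linear ∧ (∃ τ, EtaTy emptyCtx e τ) ∧ NormalizesTo e e' }

end CFA

/-!
Evaluation under `E'` splits the environment of an application `e₁ e₂` between operator and
operand, and linearity makes the two restrictions disjoint, so their sizes add up to `|ρ|`.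
The body of the called closure `⟨λx.e₀, ρ'⟩` then runs in `ρ'[x ↦ v]`, of size
`|ρ'| + 1 + |v| = |λx.e₀, ρ'| + |v|`, which is bounded by the sizes of the two sub-results.
Induction on the evaluation therefore bounds every value by `|t| + |ρ|`, provided it carries the
invariant that each closure met along the way is linear and binds only variables occurring
exactly once free in its term.
-/

namespace CFA

theorem Exp.countFree_pos_iff {x : ℕ} {e : Exp} : 0 < e.countFree x ↔ x ∈ e.fv := by
  induction e with
  | var y ℓ => by_cases h : y = x <;> simp [Exp.countFree, Exp.fv, h, Ne.symm]
  | app e₁ e₂ ℓ ih₁ ih₂ => simp [Exp.countFree, Exp.fv, ← ih₁, ← ih₂]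
  | lam y b ℓ ih => by_cases h : y = x <;> simp [Exp.countFree, Exp.fv, h, ih, Ne.symm]

def Env.erase (ρ : Env) (x : ℕ) : Env := fun y => if y = x then none else ρ y

section Size

variable {ρ : Env} {m : ℕ}

theorem EnvSize.eq_zero (hρ : EnvSize ρ m) (h : ∀ x, ρ x = none) : m = 0 := by
  cases hρ with
  | empty _ => rfl
  | cons hx _ _ => simp [h] at hx

theorem EnvSize.of_update_emptyEnv {x : ℕ} {v : Val} (h : EnvSize (emptyEnv.update x v) m) :
    ∃ n, ValSize v n ∧ m = 1 + n := by
  cases h with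
  | empty h => simpa [Env.update] using h x
  | @cons _ y w n k hy hw hrest =>
    obtain ⟨rfl, rfl⟩ : y = x ∧ v = w := by
      by_cases hyx : y = x <;> simp_all [Env.update, emptyEnv]
    have hk := hrest.eq_zero fun z => by by_cases hz : z = y <;> simp [Env.update, emptyEnv, hz]
    exact ⟨n, hw, by omega⟩

theorem EnvSize.split {ρ₁ ρ₂ : Env} (hρ : EnvSize ρ m)
    (h : ∀ x, ρ₁ x = ρ x ∧ ρ₂ x = none ∨ ρ₁ x = none ∧ ρ₂ x = ρ x) :
    ∃ m₁ m₂, EnvSize ρ₁ m₁ ∧ EnvSize ρ₂ m₂ ∧ m = m₁ + m₂ := by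
  induction m using Nat.strong_induction_on generalizing ρ ρ₁ ρ₂ with
  | _ m ih =>
    cases hρ with
    | empty hnone =>
      refine ⟨0, 0, .empty fun x => ?_, .empty fun x => ?_, rfl⟩ <;>
        rcases h x with hx | hx <;> simp [hx, hnone]
    | @cons _ x v n k hx hv hrest =>
      rcases h x with ⟨h₁x, h₂x⟩ | ⟨h₁x, h₂x⟩
      · obtain ⟨m₁, m₂, h₁, h₂, rfl⟩ := ih k (by omega) hrest (ρ₁ := ρ₁.erase x) (ρ₂ := ρ₂)
          fun y => by by_cases hy : y = x <;> simp [Env.erase, hy, h₂x, h y]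
        exact ⟨1 + n + m₁, m₂, .cons (h₁x.trans hx) hv h₁, h₂, by omega⟩
      · obtain ⟨m₁, m₂, h₁, h₂, rfl⟩ := ih k (by omega) hrest (ρ₁ := ρ₁) (ρ₂ := ρ₂.erase x)
          fun y => by by_cases hy : y = x <;> simp [Env.erase, hy, h₁x, h y]
        exact ⟨m₁, 1 + n + m₂, h₁, .cons (h₂x.trans hx) hv h₂, by omega⟩

theorem EnvSize.erase_of_eq_some {x : ℕ} {v : Val} (hρ : EnvSize ρ m) (hx : ρ x = some v) :
    ∃ n m', ValSize v n ∧ EnvSize (ρ.erase x) m' ∧ m = 1 + n + m' := by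
  obtain ⟨m₁, m', h₁, h₂, rfl⟩ := hρ.split (ρ₁ := emptyEnv.update x v) (ρ₂ := ρ.erase x)
    fun y => by by_cases hy : y = x <;> simp [Env.update, Env.erase, emptyEnv, hy, hx]
  obtain ⟨n, hn, rfl⟩ := h₁.of_update_emptyEnv
  exact ⟨n, m', hn, h₂, rfl⟩

theorem EnvSize.unique {m' : ℕ} (h : EnvSize ρ m) (h' : EnvSize ρ m') : m = m' := by
  induction m using Nat.strong_induction_on generalizing ρ m' with
  | _ m ih =>
    cases h with
    | empty hnone => exact (h'.eq_zero hnone).symm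
    | @cons _ x v n k hx hv hrest =>
      obtain ⟨n', k', hv', hrest', rfl⟩ := h'.erase_of_eq_some hx
      have hk := ih k (by omega) hrest hrest'
      cases hv with | @clo _ _ _ _ j hj =>
      cases hv' with | @clo _ _ _ _ j' hj' =>
      have hj := ih j (by simp only [Exp.size]; omega) hj hj'
      omega

theorem ValSize.unique {v : Val} {n n' : ℕ} (h : ValSize v n) (h' : ValSize v n') : n = n' := by
  cases h with | clo hm => cases h' with | clo hm' => rw [hm.unique hm']

theorem EnvSize.update {x : ℕ} {v : Val} {n : ℕ} (hρ : EnvSize ρ m) (hx : ρ x = none)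
    (hv : ValSize v n) : EnvSize (ρ.update x v) (1 + n + m) := by
  refine .cons (x := x) (by simp [Env.update]) hv ?_
  convert hρ using 1
  funext y
  by_cases hy : y = x <;> simp [Env.update, hy, hx]

end Size

/-- The invariant carried through evaluation: `LinCloses` without closedness and disjointness. -/
inductive WeakLinCloses : Env → Exp → Prop
  | mk {ρ : Env} {t : Exp} :
      t.Linear →
      (∀ x v, ρ x = some v → t.countFree x = 1) →
      (∀ x y b ℓ ρ', ρ x = some (Val.clo y b ℓ ρ') → WeakLinCloses ρ' (Exp.lam y b ℓ)) →
      WeakLinCloses ρ t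

def Val.WeakLin : Val → Prop
  | .clo y b ℓ ρ => WeakLinCloses ρ (.lam y b ℓ)

namespace WeakLinCloses

variable {ρ : Env} {t : Exp}

theorem of_linCloses (h : LinCloses ρ t) : WeakLinCloses ρ t := by
  induction h with
  | mk hlin _ hcount _ _ ih => exact ⟨hlin, hcount, ih⟩

theorem weakLin_of_eq_some {x : ℕ} {v : Val} (h : WeakLinCloses ρ t) (hx : ρ x = some v) :
    v.WeakLin := by
  obtain ⟨-, -, hclo⟩ := h
  cases v
  exact hclo _ _ _ _ _ hx

theorem eq_none_of_lam {x : ℕ} {b : Exp} {ℓ : ℕ} (h : WeakLinCloses ρ (.lam x b ℓ)) :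
    ρ x = none := by
  obtain ⟨-, hcount, -⟩ := h
  cases hx : ρ x with
  | none => rfl
  | some v => simpa [Exp.countFree] using hcount x v hx

theorem update_body {x : ℕ} {b : Exp} {ℓ : ℕ} {v : Val} (h : WeakLinCloses ρ (.lam x b ℓ))
    (hv : v.WeakLin) : WeakLinCloses (ρ.update x v) b := by
  obtain ⟨⟨hlin, hx⟩, hcount, hclo⟩ := h
  refine ⟨hlin, fun y w hy => ?_, fun y z b' ℓ' ρ' hy => ?_⟩ <;> by_cases hyx : y = x
  · exact hyx ▸ hx
  · simpa [Exp.countFree, Ne.symm hyx] using hcount y w (by simpa [Env.update, hyx] using hy)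
  · obtain rfl : v = .clo z b' ℓ' ρ' := by simpa [Env.update, hyx] using hy
    exact hv
  · exact hclo y z b' ℓ' ρ' (by simpa [Env.update, hyx] using hy)

theorem restrict {e : Exp} (h : WeakLinCloses ρ t) (he : e.Linear)
    (hcount : ∀ x v, ρ x = some v → e.countFree x ≤ 1) : WeakLinCloses (ρ.restrict e.fv) e := by
  obtain ⟨-, -, hclo⟩ := h
  refine ⟨he, fun x v hx => ?_, fun x y b ℓ ρ' hx => ?_⟩ <;> by_cases hxe : x ∈ e.fv <;>
    simp only [Env.restrict, hxe, if_true, if_false, reduceCtorEq] at hx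
  · have := hcount x v hx
    have := Exp.countFree_pos_iff.mpr hxe
    omega
  · exact hclo x y b ℓ ρ' hx

variable {e₁ e₂ : Exp} {ℓ : ℕ}

theorem app_left (h : WeakLinCloses ρ (.app e₁ e₂ ℓ)) : WeakLinCloses (ρ.restrict e₁.fv) e₁ := by
  have ⟨⟨he₁, _⟩, hcount, _⟩ := h
  refine h.restrict he₁ fun x v hx => ?_
  have := hcount x v hx
  simp only [Exp.countFree] at this
  omega

theorem app_right (h : WeakLinCloses ρ (.app e₁ e₂ ℓ)) : WeakLinCloses (ρ.restrict e₂.fv) e₂ := by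
  have ⟨⟨_, he₂⟩, hcount, _⟩ := h
  refine h.restrict he₂ fun x v hx => ?_
  have := hcount x v hx
  simp only [Exp.countFree] at this
  omega

theorem restrict_app_split (h : WeakLinCloses ρ (.app e₁ e₂ ℓ)) (x : ℕ) :
    ρ.restrict e₁.fv x = ρ x ∧ ρ.restrict e₂.fv x = none ∨
      ρ.restrict e₁.fv x = none ∧ ρ.restrict e₂.fv x = ρ x := by
  obtain ⟨-, hcount, -⟩ := h
  cases hx : ρ x with
  | none => simp [Env.restrict, hx]
  | some v =>
    have := hcount x v hx
    simp only [Exp.countFree] at this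
    simp only [Env.restrict, ← Exp.countFree_pos_iff, hx]
    split_ifs <;> simp <;> omega

end WeakLinCloses

namespace EvalE'

variable {t : Exp} {ρ : Env} {c : Val}

theorem weakLin (hev : EvalE' t ρ c) (h : WeakLinCloses ρ t) : c.WeakLin := by
  induction hev with
  | @var x => exact h.weakLin_of_eq_some (x := x) (by simp [Env.update])
  | lam => exact h
  | app _ _ _ ih₁ ih₂ ih₃ =>
    exact ih₃ (WeakLinCloses.update_body (ih₁ h.app_left) (ih₂ h.app_right))

theorem exists_valSize_le (hev : EvalE' t ρ c) (h : WeakLinCloses ρ t) {m : ℕ}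
    (hρ : EnvSize ρ m) : ∃ s, ValSize c s ∧ s ≤ t.size + m := by
  induction hev generalizing m with
  | var =>
    obtain ⟨n, hn, rfl⟩ := hρ.of_update_emptyEnv
    exact ⟨n, hn, by simp only [Exp.size]; omega⟩
  | lam => exact ⟨_, .clo hρ, le_rfl⟩
  | app hev₁ hev₂ _ ih₁ ih₂ ih₃ =>
    obtain ⟨m₁, m₂, hm₁, hm₂, rfl⟩ := hρ.split h.restrict_app_split
    obtain ⟨s₁, hs₁, hle₁⟩ := ih₁ h.app_left hm₁
    obtain ⟨s₂, hs₂, hle₂⟩ := ih₂ h.app_right hm₂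
    have hclo : WeakLinCloses _ (.lam _ _ _) := hev₁.weakLin h.app_left
    cases hs₁ with | @clo _ _ _ _ k hk =>
    obtain ⟨s₃, hs₃, hle₃⟩ :=
      ih₃ (hclo.update_body (hev₂.weakLin h.app_right)) (hk.update hclo.eq_none_of_lam hs₂)
    exact ⟨s₃, hs₃, by simp only [Exp.size] at *; omega⟩

end EvalE'

end CFA

open CFA in
/-- Evaluation of a linear closure cannot produce a larger value: if `ρ`
linearly closes `t` and `E'(t^ℓ)ρ = c`, then `|c| ≤ |t,ρ| = |t| + |ρ|`. -/
theorem eval'_size_le (t : Exp) (ρ : Env) (c : Val) (m s : ℕ)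
    (hlin : LinCloses ρ t) (hev : EvalE' t ρ c)
    (hρ : EnvSize ρ m) (hc : ValSize c s) :
    s ≤ t.size + m := by
  obtain ⟨s', hs', hle⟩ := hev.exists_valSize_le (.of_linCloses hlin) hρ
  rwa [hc.unique hs']
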